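/- Suppose Φ ⊆ {I, O, U} and let I be an unreachable-objects-free interpretation. Then the quotient I/∼ of I by the largest L_Φ-auto-bisimulation is a minimal interpretation L_Φ-bisimilar to I: for every interpretation I' that is L_Φ-bisimilar to I, the cardinality of the domain of I/∼ is at most the cardinality of the domain of I'. -/

import Mathlib

/-- A set of DL-features (subset of {I, O, Q, U, Self}). -/
structure DLFeat where
  hasI : Bool
  hasO : Bool
  hasQ : Bool
  hasU : Bool
  hasSelf : Bool

/-- An interpretation with concept names `CN`, role names `RN`, individual names `IN`
and domain `D`. -/
structure Interp (CN RN IN : Type) (D : Type) where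
  cInt : CN → Set D
  rInt : RN → D → D → Prop
  iInt : IN → D

/-- Interpretation of a basic role: a role name, possibly inverted. -/
def brInt {CN RN IN D : Type} (I : Interp CN RN IN D) (R : RN × Bool) (x y : D) : Prop :=
  if R.2 then I.rInt R.1 y x else I.rInt R.1 x y

mutual
/-- Concepts of the full language (membership in `L_Φ` is a separate predicate). -/
inductive DLConcept (CN RN IN : Type) : Type where
  | atom (A : CN)
  | top
  | bot
  | neg (C : DLConcept CN RN IN)
  | conj (C D : DLConcept CN RN IN)
  | disj (C D : DLConcept CN RN IN)
  | all (R : DLRole CN RN IN) (C : DLConcept CN RN IN)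
  | ex (R : DLRole CN RN IN) (C : DLConcept CN RN IN)
  | nom (a : IN)
  | atLeast (n : ℕ) (r : RN) (inverted : Bool) (C : DLConcept CN RN IN)
  | atMost (n : ℕ) (r : RN) (inverted : Bool) (C : DLConcept CN RN IN)
  | exSelf (r : RN)
/-- Roles of the full language. -/
inductive DLRole (CN RN IN : Type) : Type where
  | name (r : RN)
  | eps
  | comp (R S : DLRole CN RN IN)
  | runion (R S : DLRole CN RN IN)
  | star (R : DLRole CN RN IN)
  | test (C : DLConcept CN RN IN)
  | inv (r : RN)
  | univ
end

mutual
/-- The concept belongs to the language `L_Φ`. -/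
def DLConcept.inL {CN RN IN : Type} (Φ : DLFeat) : DLConcept CN RN IN → Prop
  | .atom _ => True
  | .top => True
  | .bot => True
  | .neg C => C.inL Φ
  | .conj C D => C.inL Φ ∧ D.inL Φ
  | .disj C D => C.inL Φ ∧ D.inL Φ
  | .all R C => R.inL Φ ∧ C.inL Φ
  | .ex R C => R.inL Φ ∧ C.inL Φ
  | .nom _ => Φ.hasO = true
  | .atLeast _ _ b C => Φ.hasQ = true ∧ (b = true → Φ.hasI = true) ∧ C.inL Φ
  | .atMost _ _ b C => Φ.hasQ = true ∧ (b = true → Φ.hasI = true) ∧ C.inL Φ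
  | .exSelf _ => Φ.hasSelf = true
/-- The role belongs to the language `L_Φ`. -/
def DLRole.inL {CN RN IN : Type} (Φ : DLFeat) : DLRole CN RN IN → Prop
  | .name _ => True
  | .eps => True
  | .comp R S => R.inL Φ ∧ S.inL Φ
  | .runion R S => R.inL Φ ∧ S.inL Φ
  | .star R => R.inL Φ
  | .test C => C.inL Φ
  | .inv _ => Φ.hasI = true
  | .univ => Φ.hasU = true
end

mutual
/-- Semantics of concepts. -/
def DLConcept.sem {CN RN IN D : Type} (I : Interp CN RN IN D) : DLConcept CN RN IN → Set D
  | .atom A => I.cInt A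
  | .top => Set.univ
  | .bot => ∅
  | .neg C => (DLConcept.sem I C)ᶜ
  | .conj C C' => DLConcept.sem I C ∩ DLConcept.sem I C'
  | .disj C C' => DLConcept.sem I C ∪ DLConcept.sem I C'
  | .all R C => {x | ∀ y, DLRole.sem I R x y → y ∈ DLConcept.sem I C}
  | .ex R C => {x | ∃ y, DLRole.sem I R x y ∧ y ∈ DLConcept.sem I C}
  | .nom a => {I.iInt a}
  | .atLeast n r b C =>
      {x | (n : Cardinal) ≤ Cardinal.mk {y // brInt I (r, b) x y ∧ y ∈ DLConcept.sem I C}}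
  | .atMost n r b C =>
      {x | Cardinal.mk {y // brInt I (r, b) x y ∧ y ∈ DLConcept.sem I C} ≤ (n : Cardinal)}
  | .exSelf r => {x | I.rInt r x x}
/-- Semantics of roles. -/
def DLRole.sem {CN RN IN D : Type} (I : Interp CN RN IN D) : DLRole CN RN IN → D → D → Prop
  | .name r => I.rInt r
  | .eps => Eq
  | .comp R S => Relation.Comp (DLRole.sem I R) (DLRole.sem I S)
  | .runion R S => fun x y => DLRole.sem I R x y ∨ DLRole.sem I S x y
  | .star R => Relation.ReflTransGen (DLRole.sem I R)
  | .test C => fun x y => x = y ∧ x ∈ DLConcept.sem I C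
  | .inv r => fun x y => I.rInt r y x
  | .univ => fun _ _ => True
end

/-- `Z` is an `L_Φ`-bisimulation between `I` and `I'`. -/
def Bisim {CN RN IN D D' : Type} (Φ : DLFeat) (I : Interp CN RN IN D)
    (I' : Interp CN RN IN D') (Z : D → D' → Prop) : Prop :=
  (∀ a : IN, Z (I.iInt a) (I'.iInt a)) ∧
  (∀ (A : CN) x x', Z x x' → (x ∈ I.cInt A ↔ x' ∈ I'.cInt A)) ∧
  (∀ (r : RN) x x' y, Z x x' → I.rInt r x y → ∃ y', Z y y' ∧ I'.rInt r x' y') ∧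
  (∀ (r : RN) x x' y', Z x x' → I'.rInt r x' y' → ∃ y, Z y y' ∧ I.rInt r x y) ∧
  (Φ.hasI = true →
    (∀ (r : RN) x x' y, Z x x' → I.rInt r y x → ∃ y', Z y y' ∧ I'.rInt r y' x') ∧
    (∀ (r : RN) x x' y', Z x x' → I'.rInt r y' x' → ∃ y, Z y y' ∧ I.rInt r y x)) ∧
  (Φ.hasO = true → ∀ (a : IN) x x', Z x x' → (x = I.iInt a ↔ x' = I'.iInt a)) ∧
  (Φ.hasQ = true → ∀ (r : RN) x x', Z x x' →
    ∃ h : {y // I.rInt r x y} ≃ {y' // I'.rInt r x' y'}, ∀ y, Z y.1 (h y).1) ∧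
  (Φ.hasQ = true → Φ.hasI = true → ∀ (r : RN) x x', Z x x' →
    ∃ h : {y // I.rInt r y x} ≃ {y' // I'.rInt r y' x'}, ∀ y, Z y.1 (h y).1) ∧
  (Φ.hasU = true → (∀ x, ∃ x', Z x x') ∧ (∀ x', ∃ x, Z x x')) ∧
  (Φ.hasSelf = true → ∀ (r : RN) x x', Z x x' → (I.rInt r x x ↔ I'.rInt r x' x'))

/-- One step along a basic role (role name, or inverse of a role name if `I ∈ Φ`). -/
def basicStep {CN RN IN D : Type} (Φ : DLFeat) (I : Interp CN RN IN D) (x y : D) : Prop :=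
  ∃ r : RN, I.rInt r x y ∨ (Φ.hasI = true ∧ I.rInt r y x)

/-- `I` is unreachable-objects-free: every element is reachable from some named
individual via a finite path of basic-role edges. -/
def UOF {CN RN IN D : Type} (Φ : DLFeat) (I : Interp CN RN IN D) : Prop :=
  ∀ x : D, ∃ a : IN, Relation.ReflTransGen (basicStep Φ I) (I.iInt a) x

/-- `I` validates the GCI `C ⊑ C'`. -/
def satGCI {CN RN IN D : Type} (I : Interp CN RN IN D) (C C' : DLConcept CN RN IN) : Prop :=
  DLConcept.sem I C ⊆ DLConcept.sem I C'

/-- `I` is a model of the TBox `T`. -/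
def modelsTBox {CN RN IN D : Type} (I : Interp CN RN IN D)
    (T : Set (DLConcept CN RN IN × DLConcept CN RN IN)) : Prop :=
  ∀ p ∈ T, satGCI I p.1 p.2

/-- Individual assertions. -/
inductive Assertion (CN RN IN : Type) : Type where
  | conc (C : DLConcept CN RN IN) (a : IN)
  | rolePos (R : DLRole CN RN IN) (a b : IN)
  | roleNeg (R : DLRole CN RN IN) (a b : IN)
  | eq (a b : IN)
  | neq (a b : IN)

/-- The assertion belongs to `L_Φ`. -/
def Assertion.inL {CN RN IN : Type} (Φ : DLFeat) : Assertion CN RN IN → Prop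
  | .conc C _ => C.inL Φ
  | .rolePos R _ _ => R.inL Φ
  | .roleNeg R _ _ => R.inL Φ
  | .eq _ _ => True
  | .neq _ _ => True

/-- `I` satisfies the individual assertion. -/
def Assertion.sat {CN RN IN D : Type} (I : Interp CN RN IN D) : Assertion CN RN IN → Prop
  | .conc C a => I.iInt a ∈ DLConcept.sem I C
  | .rolePos R a b => DLRole.sem I R (I.iInt a) (I.iInt b)
  | .roleNeg R a b => ¬ DLRole.sem I R (I.iInt a) (I.iInt b)
  | .eq a b => I.iInt a = I.iInt b
  | .neq a b => I.iInt a ≠ I.iInt b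

/-- `I` is a model of the ABox `A`. -/
def modelsABox {CN RN IN D : Type} (I : Interp CN RN IN D) (A : Set (Assertion CN RN IN)) : Prop :=
  ∀ φ ∈ A, φ.sat I

/-- A role axiom `R₁ ∘ … ∘ R_k ⊑ r` (`ε ⊑ r` when the list is empty), the `R_i` basic roles. -/
structure RoleAx (RN : Type) where
  lhs : List (RN × Bool)
  rhs : RN

/-- The role axiom is in `L_Φ` (inverse basic roles only if `I ∈ Φ`). -/
def RoleAx.inL {RN : Type} (Φ : DLFeat) (ax : RoleAx RN) : Prop :=
  ∀ p ∈ ax.lhs, p.2 = true → Φ.hasI = true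

/-- Interpretation of a composition chain of basic roles (`ε` for the empty chain). -/
def chainInt {CN RN IN D : Type} (I : Interp CN RN IN D) : List (RN × Bool) → D → D → Prop
  | [] => Eq
  | R :: l => fun x z => ∃ y, brInt I R x y ∧ chainInt I l y z

/-- `I` validates the role axiom. -/
def satRoleAx {CN RN IN D : Type} (I : Interp CN RN IN D) (ax : RoleAx RN) : Prop :=
  ∀ x y, chainInt I ax.lhs x y → I.rInt ax.rhs x y

/-- `I` is a model of the RBox `R`. -/
def modelsRBox {CN RN IN D : Type} (I : Interp CN RN IN D) (R : Set (RoleAx RN)) : Prop :=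
  ∀ ax ∈ R, satRoleAx I ax

/-- `I'` is an r-extension of `I`. -/
def RExt {CN RN IN D : Type} (I I' : Interp CN RN IN D) : Prop :=
  I'.cInt = I.cInt ∧ I'.iInt = I.iInt ∧ ∀ (r : RN) x y, I.rInt r x y → I'.rInt r x y

/-- `I'` is the least r-extension of `I` validating the RBox `R`. -/
def LeastRExt {CN RN IN D : Type} (I : Interp CN RN IN D) (R : Set (RoleAx RN))
    (I' : Interp CN RN IN D) : Prop :=
  RExt I I' ∧ modelsRBox I' R ∧
    ∀ I'' : Interp CN RN IN D, RExt I I'' → modelsRBox I'' R →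
      ∀ (r : RN) x y, I'.rInt r x y → I''.rInt r x y

/-- `I` is finitely branching w.r.t. `L_Φ`. -/
def FinBranch {CN RN IN D : Type} (Φ : DLFeat) (I : Interp CN RN IN D) : Prop :=
  ∀ (r : RN) (x : D), {y | I.rInt r x y}.Finite ∧ (Φ.hasI = true → {y | I.rInt r y x}.Finite)

/-- `x` and `x'` are `L_Φ`-equivalent: they satisfy the same concepts of `L_Φ`. -/
def LEquiv {CN RN IN D D' : Type} (Φ : DLFeat) (I : Interp CN RN IN D)
    (I' : Interp CN RN IN D') (x : D) (x' : D') : Prop :=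
  ∀ C : DLConcept CN RN IN, C.inL Φ → (x ∈ DLConcept.sem I C ↔ x' ∈ DLConcept.sem I' C)

/-- The largest `L_Φ`-auto-bisimulation of `I` (union of all auto-bisimulations). -/
def gbisim {CN RN IN D : Type} (Φ : DLFeat) (I : Interp CN RN IN D) (x y : D) : Prop :=
  ∃ Z, Bisim Φ I I Z ∧ Z x y

/-- The quotient interpretation of `I` w.r.t. the largest `L_Φ`-auto-bisimulation. -/
def quotInterp {CN RN IN D : Type} (Φ : DLFeat) (I : Interp CN RN IN D) :
    Interp CN RN IN (Quot (gbisim Φ I)) where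
  cInt A := {q | ∃ x, Quot.mk _ x = q ∧ x ∈ I.cInt A}
  rInt r q q' := ∃ x y, Quot.mk _ x = q ∧ Quot.mk _ y = q' ∧ I.rInt r x y
  iInt a := Quot.mk _ (I.iInt a)

/-- A QS-interpretation: an interpretation together with multiplicity functions for
basic roles and self-loop sets for role names. -/
structure QSInterp (CN RN IN D : Type) where
  toInterp : Interp CN RN IN D
  QU : (RN × Bool) → D → D → ℕ
  SE : RN → Set D

/-- The defining positivity condition of QS-interpretations:
`QU R x y > 0` iff `R` connects `x` to `y`. -/
def QSInterp.Proper {CN RN IN D : Type} (J : QSInterp CN RN IN D) : Prop :=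
  ∀ (R : RN × Bool) x y, 0 < J.QU R x y ↔ brInt J.toInterp R x y

/-- `Σ {f y : y ∈ S}` as an extended natural number. -/
noncomputable def qsum {D : Type} (f : D → ℕ) (S : Set D) : ℕ∞ :=
  ⨆ (s : Finset D) (_ : ↑s ⊆ S), (∑ y ∈ s, f y : ℕ∞)

mutual
/-- Semantics of concepts in a QS-interpretation. -/
noncomputable def DLConcept.qsem {CN RN IN D : Type} (J : QSInterp CN RN IN D) :
    DLConcept CN RN IN → Set D
  | .atom A => J.toInterp.cInt A
  | .top => Set.univ
  | .bot => ∅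
  | .neg C => (DLConcept.qsem J C)ᶜ
  | .conj C C' => DLConcept.qsem J C ∩ DLConcept.qsem J C'
  | .disj C C' => DLConcept.qsem J C ∪ DLConcept.qsem J C'
  | .all R C => {x | ∀ y, DLRole.qsem J R x y → y ∈ DLConcept.qsem J C}
  | .ex R C => {x | ∃ y, DLRole.qsem J R x y ∧ y ∈ DLConcept.qsem J C}
  | .nom a => {J.toInterp.iInt a}
  | .atLeast n r b C => {x | (n : ℕ∞) ≤ qsum (J.QU (r, b) x) (DLConcept.qsem J C)}
  | .atMost n r b C => {x | qsum (J.QU (r, b) x) (DLConcept.qsem J C) ≤ (n : ℕ∞)}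
  | .exSelf r => J.SE r
/-- Semantics of roles in a QS-interpretation. -/
noncomputable def DLRole.qsem {CN RN IN D : Type} (J : QSInterp CN RN IN D) :
    DLRole CN RN IN → D → D → Prop
  | .name r => J.toInterp.rInt r
  | .eps => Eq
  | .comp R S => Relation.Comp (DLRole.qsem J R) (DLRole.qsem J S)
  | .runion R S => fun x y => DLRole.qsem J R x y ∨ DLRole.qsem J S x y
  | .star R => Relation.ReflTransGen (DLRole.qsem J R)
  | .test C => fun x y => x = y ∧ x ∈ DLConcept.qsem J C
  | .inv r => fun x y => J.toInterp.rInt r y x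
  | .univ => fun _ _ => True
end

/-- The quotient QS-interpretation of a traditional interpretation `I` w.r.t. the
largest `L_Φ`-auto-bisimulation. -/
noncomputable def qsQuot {CN RN IN D : Type} (Φ : DLFeat) (I : Interp CN RN IN D) :
    QSInterp CN RN IN (Quot (gbisim Φ I)) where
  toInterp := quotInterp Φ I
  QU R q q' := sSup {n | ∃ x, Quot.mk _ x = q ∧
    n = Set.ncard {y | Quot.mk (gbisim Φ I) y = q' ∧ brInt I R x y}}
  SE r := {q | ∃ x, Quot.mk _ x = q ∧ I.rInt r x x}

/-! Fix a bisimulation `Z` between `I` and `I'`. Two elements of `I` with a common `Z`-partner are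
related by the auto-bisimulation `Z ∘ Z⁻¹`, hence `∼`-equivalent. Since `Z` relates the named
individuals and every element of `I` is reachable from one of them, the forth conditions make `Z`
total on `I`. Choosing a `Z`-partner of a representative of each `∼`-class therefore injects the
quotient into the domain of `I'`. -/

section ForthBack

variable {α β γ : Type} {R : α → α → Prop} {R' : β → β → Prop} {R'' : γ → γ → Prop}
  {Z₁ : α → β → Prop} {Z₂ : β → γ → Prop}

theorem forth_comp (h₁ : ∀ x x' y, Z₁ x x' → R x y → ∃ y', Z₁ y y' ∧ R' x' y')
    (h₂ : ∀ x' x'' y', Z₂ x' x'' → R' x' y' → ∃ y'', Z₂ y' y'' ∧ R'' x'' y'') :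
    ∀ x x'' y, Relation.Comp Z₁ Z₂ x x'' → R x y →
      ∃ y'', Relation.Comp Z₁ Z₂ y y'' ∧ R'' x'' y'' := by
  rintro x x'' y ⟨x', h, h'⟩ hr
  obtain ⟨y', hy, hr'⟩ := h₁ x x' y h hr
  obtain ⟨y'', hy', hr''⟩ := h₂ x' x'' y' h' hr'
  exact ⟨y'', ⟨y', hy, hy'⟩, hr''⟩

theorem back_comp (h₁ : ∀ x x' y', Z₁ x x' → R' x' y' → ∃ y, Z₁ y y' ∧ R x y)
    (h₂ : ∀ x' x'' y'', Z₂ x' x'' → R'' x'' y'' → ∃ y', Z₂ y' y'' ∧ R' x' y') :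
    ∀ x x'' y'', Relation.Comp Z₁ Z₂ x x'' → R'' x'' y'' →
      ∃ y, Relation.Comp Z₁ Z₂ y y'' ∧ R x y := by
  rintro x x'' y'' ⟨x', h, h'⟩ hr
  obtain ⟨y', hy', hr'⟩ := h₂ x' x'' y'' h' hr
  obtain ⟨y, hy, hr₀⟩ := h₁ x x' y' h hr'
  exact ⟨y, ⟨y', hy, hy'⟩, hr₀⟩

end ForthBack

namespace Bisim

variable {CN RN IN D D' D'' : Type} {Φ : DLFeat} {I : Interp CN RN IN D}
  {I' : Interp CN RN IN D'} {I'' : Interp CN RN IN D''}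

theorem symm {Z : D → D' → Prop} (hZ : Bisim Φ I I' Z) : Bisim Φ I' I (flip Z) := by
  obtain ⟨hind, hcn, hzig, hzag, hinv, hnom, hQ, hQinv, hU, hSelf⟩ := hZ
  refine ⟨hind, fun A x' x h => (hcn A x x' h).symm, fun r x' x y' h hr => hzag r x x' y' h hr,
    fun r x' x y h hr => hzig r x x' y h hr,
    fun hi => ⟨fun r x' x y' h hr => (hinv hi).2 r x x' y' h hr,
      fun r x' x y h hr => (hinv hi).1 r x x' y h hr⟩,
    fun ho a x' x h => (hnom ho a x x' h).symm, fun hq r x' x h => ?_, fun hq hi r x' x h => ?_,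
    fun hu => ⟨(hU hu).2, (hU hu).1⟩, fun hs r x' x h => (hSelf hs r x x' h).symm⟩
  · obtain ⟨e, he⟩ := hQ hq r x x' h
    exact ⟨e.symm, fun y' => by simpa [flip] using he (e.symm y')⟩
  · obtain ⟨e, he⟩ := hQinv hq hi r x x' h
    exact ⟨e.symm, fun y' => by simpa [flip] using he (e.symm y')⟩

theorem comp {Z₁ : D → D' → Prop} {Z₂ : D' → D'' → Prop} (h₁ : Bisim Φ I I' Z₁)
    (h₂ : Bisim Φ I' I'' Z₂) : Bisim Φ I I'' (Relation.Comp Z₁ Z₂) := by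
  obtain ⟨hind₁, hcn₁, hzig₁, hzag₁, hinv₁, hnom₁, hQ₁, hQinv₁, hU₁, hSelf₁⟩ := h₁
  obtain ⟨hind₂, hcn₂, hzig₂, hzag₂, hinv₂, hnom₂, hQ₂, hQinv₂, hU₂, hSelf₂⟩ := h₂
  refine ⟨fun a => ⟨_, hind₁ a, hind₂ a⟩,
    fun A x x'' ⟨x', h, h'⟩ => (hcn₁ A x x' h).trans (hcn₂ A x' x'' h'),
    fun r => forth_comp (hzig₁ r) (hzig₂ r), fun r => back_comp (hzag₁ r) (hzag₂ r),
    fun hi => ⟨fun r => forth_comp ((hinv₁ hi).1 r) ((hinv₂ hi).1 r),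
      fun r => back_comp ((hinv₁ hi).2 r) ((hinv₂ hi).2 r)⟩,
    fun ho a x x'' ⟨x', h, h'⟩ => (hnom₁ ho a x x' h).trans (hnom₂ ho a x' x'' h'), ?_, ?_,
    fun hu => ⟨?_, ?_⟩,
    fun hs r x x'' ⟨x', h, h'⟩ => (hSelf₁ hs r x x' h).trans (hSelf₂ hs r x' x'' h')⟩
  · rintro hq r x x'' ⟨x', h, h'⟩
    obtain ⟨e₁, he₁⟩ := hQ₁ hq r x x' h
    obtain ⟨e₂, he₂⟩ := hQ₂ hq r x' x'' h'
    exact ⟨e₁.trans e₂, fun y => ⟨_, he₁ y, he₂ (e₁ y)⟩⟩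
  · rintro hq hi r x x'' ⟨x', h, h'⟩
    obtain ⟨e₁, he₁⟩ := hQinv₁ hq hi r x x' h
    obtain ⟨e₂, he₂⟩ := hQinv₂ hq hi r x' x'' h'
    exact ⟨e₁.trans e₂, fun y => ⟨_, he₁ y, he₂ (e₁ y)⟩⟩
  · intro x
    obtain ⟨x', h⟩ := (hU₁ hu).1 x
    obtain ⟨x'', h'⟩ := (hU₂ hu).1 x'
    exact ⟨x'', x', h, h'⟩
  · intro x''
    obtain ⟨x', h'⟩ := (hU₂ hu).2 x''
    obtain ⟨x, h⟩ := (hU₁ hu).2 x'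
    exact ⟨x, x', h, h'⟩

theorem gbisim_of_rel_of_rel {Z : D → D' → Prop} (hZ : Bisim Φ I I' Z) {x y : D} {x' : D'}
    (hx : Z x x') (hy : Z y x') : gbisim Φ I x y :=
  ⟨_, hZ.comp hZ.symm, x', hx, hy⟩

theorem exists_rel_of_reachable {Z : D → D' → Prop} (hZ : Bisim Φ I I' Z) {a : IN} {x : D}
    (hx : Relation.ReflTransGen (basicStep Φ I) (I.iInt a) x) : ∃ x', Z x x' := by
  induction hx with
  | refl => exact ⟨_, hZ.1 a⟩
  | tail _ hstep ih =>
    obtain ⟨u', hu⟩ := ih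
    obtain ⟨r, hr | ⟨hi, hr⟩⟩ := hstep
    · obtain ⟨v', hv, -⟩ := hZ.2.2.1 r _ u' _ hu hr
      exact ⟨v', hv⟩
    · obtain ⟨v', hv, -⟩ := (hZ.2.2.2.2.1 hi).1 r _ u' _ hu hr
      exact ⟨v', hv⟩

theorem exists_rel_of_UOF {Z : D → D' → Prop} (hZ : Bisim Φ I I' Z) (huof : UOF Φ I) (x : D) :
    ∃ x', Z x x' :=
  let ⟨_, ha⟩ := huof x
  hZ.exists_rel_of_reachable ha

end Bisim

/-- For `Φ ⊆ {I,O,U}` and an unreachable-objects-free interpretation `I`,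
the quotient of `I` by the largest `L_Φ`-auto-bisimulation is a minimal interpretation
`L_Φ`-bisimilar to `I`. -/
theorem quotient_minimality {CN RN IN D : Type} (Φ : DLFeat)
    (hQ : Φ.hasQ = false) (hS : Φ.hasSelf = false)
    (I : Interp CN RN IN D) (huof : UOF Φ I) :
    ∀ (D' : Type) (I' : Interp CN RN IN D'), (∃ Z, Bisim Φ I I' Z) →
      Cardinal.mk (Quot (gbisim Φ I)) ≤ Cardinal.mk D' := by
  rintro D' I' ⟨Z, hZ⟩
  choose f hf using fun q : Quot (gbisim Φ I) => hZ.exists_rel_of_UOF huof q.out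
  refine ⟨⟨f, fun q₁ q₂ heq => ?_⟩⟩
  have hrel : gbisim Φ I q₁.out q₂.out := hZ.gbisim_of_rel_of_rel (hf q₁) (heq ▸ hf q₂)
  rw [← Quot.out_eq q₁, ← Quot.out_eq q₂]
  exact Quot.sound hrel
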